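/- Let S = R⟨x₁,…,xₙ; σ, δ⟩ be a free skew extension and C the center of R. If there exists c ∈ C such that cIₙ − σ(c) is invertible in Mₙ(R), then setting y_j = x_j c − c x_j gives elements y₁,…,yₙ such that S is the (σ,0)-free skew extension of R generated by y₁,…,yₙ; in particular r·y_j = Σᵢ yᵢσ_{ij}(r) for all r ∈ R and j. -/

import Mathlib

/-!
The rule `c x_j = Σᵢ xᵢ σᵢⱼ(c) + δⱼ(c)` gives `y_j = Σᵢ xᵢ Aᵢⱼ - δⱼ(c)` with `A = cIₙ - σ(c)`,
hence `x = y A⁻¹ + δ(c) A⁻¹`. Since `c` is central, the `δ`-terms cancel in `r y_j`, so the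
`yᵢ` obey the commutation rule with zero derivation. As each family is affine in the other and
left multiplication by `R` preserves degrees, x-monomials and y-monomials span the same degree
filtration of `S`; in particular the y-monomials span `S`. For independence, if the `z_j` and
`Σ_j y_j z_j` have degree `≤ k`, then so has `Σᵢ xᵢ (A z)ᵢ`; freeness of the x-monomials puts
`A z`, hence `z = A⁻¹ (A z)`, in degree `< k`, and descending on the degree kills every
coefficient.
-/

/-- `δ : R → Rⁿ` is a right `σ`-derivation: additive and
`δ(rs) = δ(r)σ(s) + rδ(s)` (row-by-matrix multiplication componentwise). -/
def IsRightSigmaDeriv {R : Type} [Ring R] {n : ℕ}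
    (σ : R →+* Matrix (Fin n) (Fin n) R) (δ : R → Fin n → R) : Prop :=
  (∀ r s : R, δ (r + s) = δ r + δ s) ∧
  ∀ (r s : R) (j : Fin n), δ (r * s) j = (∑ i, δ r i * σ s i j) + r * δ s j

/-- `S` (an `R`-ring via `lam`) together with `x₁,…,xₙ` is a `(σ,δ)`-free skew
extension of `R`: the multiplicative submonoid generated by the `xᵢ` is free on them
(the induced monoid homomorphism from the free monoid on `n` letters is injective),
`S` is a free right `R`-module with basis the set of monomials in the `xᵢ`
(every element of `S` is uniquely a finite sum `Σ_w w·a_w`), and the commutation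
rule `r·x_j = Σᵢ xᵢσ_{ij}(r) + δ_j(r)` holds. -/
def IsSkewFreeExt {R : Type} [Ring R] {n : ℕ}
    (σ : R →+* Matrix (Fin n) (Fin n) R) (δ : R → Fin n → R)
    (S : Type) [Ring S] (lam : R →+* S) (x : Fin n → S) : Prop :=
  Function.Injective (FreeMonoid.lift x) ∧
  Function.Bijective (fun c : FreeMonoid (Fin n) →₀ R =>
    c.sum fun w a => FreeMonoid.lift x w * lam a) ∧
  ∀ (r : R) (j : Fin n), lam r * x j = (∑ i, x i * lam (σ r i j)) + lam (δ r j)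

namespace SkewFreeExt

open Finsupp

section Words

variable {R : Type*} [Ring R] {n : ℕ}

noncomputable def tail (j : Fin n) (p : FreeMonoid (Fin n) →₀ R) :
    FreeMonoid (Fin n) →₀ R :=
  p.comapDomain (FreeMonoid.of j * ·) (mul_right_injective _).injOn

@[simp]
lemma tail_apply (j : Fin n) (p : FreeMonoid (Fin n) →₀ R) (w : FreeMonoid (Fin n)) :
    tail j p w = p (FreeMonoid.of j * w) :=
  comapDomain_apply _ _ _ _

noncomputable def cons (a : R) (q : Fin n → FreeMonoid (Fin n) →₀ R) :
    FreeMonoid (Fin n) →₀ R :=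
  single 1 a + ∑ j, (q j).mapDomain (FreeMonoid.of j * ·)

lemma cons_apply_one (a : R) (q : Fin n → FreeMonoid (Fin n) →₀ R) : cons a q 1 = a := by
  have hne : ∀ j : Fin n, (1 : FreeMonoid (Fin n)) ∉ Set.range (FreeMonoid.of j * ·) := by
    rintro j ⟨w, hw⟩
    simpa using congrArg FreeMonoid.length hw
  simp [cons, mapDomain_of_notMem_range _ _ (hne _)]

lemma cons_apply_of_mul (a : R) (q : Fin n → FreeMonoid (Fin n) →₀ R) (i : Fin n)
    (w : FreeMonoid (Fin n)) : cons a q (FreeMonoid.of i * w) = q i w := by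
  have hne : ∀ j ≠ i, FreeMonoid.of i * w ∉ Set.range (FreeMonoid.of j * ·) := by
    rintro j hji ⟨u, hu⟩
    have := congrArg FreeMonoid.toList hu
    simp only [FreeMonoid.toList_mul, FreeMonoid.toList_of, List.singleton_append,
      List.cons.injEq] at this
    exact hji this.1
  rw [cons, Finsupp.add_apply, single_eq_of_ne (by simpa using congrArg FreeMonoid.length ·),
    zero_add, finsetSum_apply, Finset.sum_eq_single i
      (fun j _ hji => mapDomain_of_notMem_range _ _ (hne j hji)) (by simp),
    mapDomain_apply (mul_right_injective _)]

lemma tail_cons (a : R) (q : Fin n → FreeMonoid (Fin n) →₀ R) (j : Fin n) :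
    tail j (cons a q) = q j := by
  ext w; rw [tail_apply, cons_apply_of_mul]

lemma cons_tail (p : FreeMonoid (Fin n) →₀ R) : cons (p 1) (fun j => tail j p) = p := by
  ext w
  induction w using FreeMonoid.casesOn with
  | one => exact cons_apply_one _ _
  | of_mul j w => rw [cons_apply_of_mul, tail_apply]

lemma tail_mem_supported {k : ℕ} {p : FreeMonoid (Fin n) →₀ R}
    (hp : p ∈ supported R R {w | w.length < k + 1}) (j : Fin n) :
    tail j p ∈ supported R R {w | w.length < k} := by
  rw [mem_supported'] at hp ⊢
  intro w hw
  rw [tail_apply]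
  exact hp _ (by
    simp only [Set.mem_ofPred_eq, FreeMonoid.length_mul, FreeMonoid.length_of] at hw ⊢; omega)

lemma mem_supported_of_tail_mem {k : ℕ} {p : FreeMonoid (Fin n) →₀ R}
    (hp : ∀ j, tail j p ∈ supported R R {w | w.length < k}) :
    p ∈ supported R R {w | w.length < k + 1} := by
  rw [mem_supported']
  intro w hw
  induction w using FreeMonoid.casesOn with
  | one => simp at hw
  | of_mul j w =>
    rw [← tail_apply]
    exact (mem_supported' _ _).1 (hp j) w (by
      simp only [Set.mem_ofPred_eq, FreeMonoid.length_mul, FreeMonoid.length_of] at hw ⊢; omega)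

lemma exists_mem_supported_length_lt (p : FreeMonoid (Fin n) →₀ R) :
    ∃ k, p ∈ supported R R {w : FreeMonoid (Fin n) | w.length < k} :=
  ⟨p.support.sup FreeMonoid.length + 1, fun _ hw => Nat.lt_succ_of_le (Finset.le_sup hw)⟩

end Words

section Filtration

variable {R S : Type*} [Ring R] [Ring S] {n : ℕ} (lam : R →+* S)

noncomputable def monomialSum (g : Fin n → S) : (FreeMonoid (Fin n) →₀ R) →+ S :=
  liftAddHom fun w => (AddMonoidHom.mulLeft (FreeMonoid.lift g w)).comp lam.toAddMonoidHom

lemma monomialSum_apply (g : Fin n → S) (p : FreeMonoid (Fin n) →₀ R) :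
    monomialSum lam g p = p.sum fun w a => FreeMonoid.lift g w * lam a := rfl

lemma monomialSum_single (g : Fin n → S) (w : FreeMonoid (Fin n)) (a : R) :
    monomialSum lam g (single w a) = FreeMonoid.lift g w * lam a := by
  simp [monomialSum_apply]

lemma monomialSum_mapDomain_of_mul (g : Fin n → S) (j : Fin n) (p : FreeMonoid (Fin n) →₀ R) :
    monomialSum lam g (p.mapDomain (FreeMonoid.of j * ·)) = g j * monomialSum lam g p := by
  simp only [monomialSum_apply, sum_mapDomain_index_inj (mul_right_injective _), mul_sum,
    map_mul, FreeMonoid.lift_eval_of, mul_assoc]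

lemma monomialSum_cons (g : Fin n → S) (a : R) (q : Fin n → FreeMonoid (Fin n) →₀ R) :
    monomialSum lam g (cons a q) = lam a + ∑ j, g j * monomialSum lam g (q j) := by
  simp [cons, monomialSum_single, monomialSum_mapDomain_of_mul]

lemma monomialSum_eq_add_sum_tail (g : Fin n → S) (p : FreeMonoid (Fin n) →₀ R) :
    monomialSum lam g p = lam (p 1) + ∑ j, g j * monomialSum lam g (tail j p) := by
  conv_lhs => rw [← cons_tail p]
  exact monomialSum_cons lam g _ _

noncomputable def filtration (g : Fin n → S) (k : ℕ) : AddSubgroup S :=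
  (supported R R {w : FreeMonoid (Fin n) | w.length < k}).toAddSubgroup.map (monomialSum lam g)

variable {lam}

lemma monomialSum_mem_filtration {g : Fin n → S} {k : ℕ} {p : FreeMonoid (Fin n) →₀ R}
    (hp : p ∈ supported R R {w | w.length < k}) : monomialSum lam g p ∈ filtration lam g k :=
  AddSubgroup.mem_map_of_mem _ hp

lemma lift_mul_mem_filtration {g : Fin n → S} {k : ℕ} {w : FreeMonoid (Fin n)}
    (hw : w.length < k) (a : R) : FreeMonoid.lift g w * lam a ∈ filtration lam g k := by
  rw [← monomialSum_single]
  exact monomialSum_mem_filtration (single_mem_supported R a hw)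

lemma filtration_mono (g : Fin n → S) : Monotone (filtration lam g) := fun _ _ hkm =>
  AddSubgroup.map_mono (supported_mono (M := R) (R := R) fun _ hw => lt_of_lt_of_le hw hkm)

lemma filtration_zero (g : Fin n → S) : filtration lam g 0 = ⊥ := by
  simp [filtration]

lemma filtration_le_range (g : Fin n → S) (k : ℕ) :
    filtration lam g k ≤ (monomialSum lam g).range :=
  AddSubgroup.map_le_range _ _

lemma mul_mem_filtration_of_forall {g : Fin n → S} {s : S} {k m : ℕ}
    (h : ∀ w a, w.length < k → s * (FreeMonoid.lift g w * lam a) ∈ filtration lam g m)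
    {z : S} (hz : z ∈ filtration lam g k) : s * z ∈ filtration lam g m := by
  obtain ⟨p, hp, rfl⟩ := hz
  rw [monomialSum_apply, mul_sum]
  exact sum_mem fun w hw => h w _ ((mem_supported R p).1 hp hw)

lemma mul_mem_filtration_succ {g : Fin n → S} {k : ℕ} (j : Fin n) {z : S}
    (hz : z ∈ filtration lam g k) : g j * z ∈ filtration lam g (k + 1) :=
  mul_mem_filtration_of_forall (fun w a hw => by
    rw [← mul_assoc, ← FreeMonoid.lift_eval_of g j, ← map_mul]
    exact lift_mul_mem_filtration
      (by rw [FreeMonoid.length_mul, FreeMonoid.length_of]; omega) a) hz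

variable {σ : R → Matrix (Fin n) (Fin n) R} {δ : R → Fin n → R}

lemma lam_mul_mem_filtration {g : Fin n → S}
    (hg : ∀ r j, lam r * g j = (∑ i, g i * lam (σ r i j)) + lam (δ r j))
    (r : R) {k : ℕ} {z : S} (hz : z ∈ filtration lam g k) :
    lam r * z ∈ filtration lam g k := by
  have key : ∀ (w : FreeMonoid (Fin n)) (r a : R),
      lam r * (FreeMonoid.lift g w * lam a) ∈ filtration lam g (w.length + 1) := by
    intro w
    induction w using FreeMonoid.inductionOn' with
    | one =>
      intro r a
      rw [map_one, one_mul, ← map_mul, ← one_mul (lam _), ← map_one (FreeMonoid.lift g)]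
      exact lift_mul_mem_filtration (by simp) _
    | of_mul j w ih =>
      intro r a
      rw [map_mul, FreeMonoid.lift_eval_of, mul_assoc, ← mul_assoc (lam r), hg, add_mul,
        Finset.sum_mul, FreeMonoid.length_mul, FreeMonoid.length_of, add_comm 1]
      refine add_mem (sum_mem fun i _ => ?_) (filtration_mono g (Nat.le_succ _) (ih _ _))
      rw [mul_assoc]
      exact mul_mem_filtration_succ i (ih _ _)
  exact mul_mem_filtration_of_forall (fun w a hw => filtration_mono g (by omega) (key w r a)) hz

lemma filtration_le_of_eq_sum {g h : Fin n → S}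
    (hg : ∀ r j, lam r * g j = (∑ i, g i * lam (σ r i j)) + lam (δ r j))
    (M : Matrix (Fin n) (Fin n) R) (e : Fin n → R)
    (hh : ∀ j, h j = (∑ i, g i * lam (M i j)) + lam (e j)) (k : ℕ) :
    filtration lam h k ≤ filtration lam g k := by
  have hmul : ∀ j {m : ℕ} {z : S},
      z ∈ filtration lam g m → h j * z ∈ filtration lam g (m + 1) := by
    intro j m z hz
    rw [hh, add_mul, Finset.sum_mul]
    refine add_mem (sum_mem fun i _ => ?_)
      (filtration_mono g (Nat.le_succ m) (lam_mul_mem_filtration hg _ hz))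
    rw [mul_assoc]
    exact mul_mem_filtration_succ i (lam_mul_mem_filtration hg _ hz)
  have key : ∀ (w : FreeMonoid (Fin n)) (a : R),
      FreeMonoid.lift h w * lam a ∈ filtration lam g (w.length + 1) := by
    intro w
    induction w using FreeMonoid.inductionOn' with
    | one =>
      intro a
      rw [map_one, ← map_one (FreeMonoid.lift g)]
      exact lift_mul_mem_filtration (by simp) a
    | of_mul j w ih =>
      intro a
      rw [map_mul, FreeMonoid.lift_eval_of, mul_assoc, FreeMonoid.length_mul,
        FreeMonoid.length_of, add_comm 1]
      exact hmul j (ih a)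
  rintro _ ⟨p, hp, rfl⟩
  rw [monomialSum_apply]
  exact sum_mem fun w hw => filtration_mono g ((mem_supported R p).1 hp hw) (key w _)

end Filtration

section Commutator

variable {R S : Type*} [Ring R] [Ring S] {n : ℕ} {lam : R →+* S}
  {σ : R → Matrix (Fin n) (Fin n) R} {δ : R → Fin n → R} {x : Fin n → S}

lemma commutator_eq_sum (hx : ∀ r j, lam r * x j = (∑ i, x i * lam (σ r i j)) + lam (δ r j))
    (c : R) (j : Fin n) :
    x j * lam c - lam c * x j = (∑ i, x i * lam ((c • 1 - σ c) i j)) - lam (δ c j) := by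
  simp only [Matrix.sub_apply, Matrix.smul_apply, Matrix.one_apply, smul_eq_mul, mul_ite,
    mul_one, mul_zero, map_sub, mul_sub, Finset.sum_sub_distrib, apply_ite lam, map_zero,
    Finset.sum_ite_eq', Finset.mem_univ, if_true, hx]
  abel

lemma lam_mul_commutator (hx : ∀ r j, lam r * x j = (∑ i, x i * lam (σ r i j)) + lam (δ r j))
    {s : S} (hs : ∀ t, lam t * s = s * lam t) (r : R) (j : Fin n) :
    lam r * (x j * s - s * x j) = ∑ i, (x i * s - s * x i) * lam (σ r i j) := by
  have : lam r * (x j * s - s * x j) = lam r * x j * s - s * (lam r * x j) := by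
    rw [mul_sub, ← mul_assoc, ← mul_assoc, hs, mul_assoc, mul_assoc]
  rw [this, hx, add_mul, mul_add, hs, Finset.sum_mul, Finset.mul_sum, add_sub_add_right_eq_sub,
    ← Finset.sum_sub_distrib]
  simp only [sub_mul, mul_assoc, hs]

end Commutator

section Freeness

variable {R S : Type*} [Ring R] [Ring S] {n : ℕ} {lam : R →+* S}
  {σ : R → Matrix (Fin n) (Fin n) R} {δ : R → Fin n → R} {x y : Fin n → S}

lemma eq_sum_add_of_eq_sum_sub {A B : Matrix (Fin n) (Fin n) R} {d : Fin n → R}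
    (hy : ∀ j, y j = (∑ i, x i * lam (A i j)) - lam (d j)) (hAB : A * B = 1) (i : Fin n) :
    x i = (∑ j, y j * lam (B j i)) + lam (Matrix.vecMul d B i) := by
  have hx : ∑ l, x l * lam ((A * B) l i) = x i := by
    simp [hAB, Matrix.one_apply]
  simp only [hy, sub_mul, Finset.sum_sub_distrib, Finset.sum_mul, mul_assoc, ← map_mul,
    Matrix.vecMul, dotProduct, map_sum]
  rw [Finset.sum_comm, ← hx]
  simp only [Matrix.mul_apply, map_sum, Finset.mul_sum]
  abel

lemma injective_of_injective_monomialSum (h : Function.Injective (monomialSum lam x)) :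
    Function.Injective lam := fun a b hab =>
  single_injective 1 (h (by simp only [monomialSum_single, hab]))

lemma mem_filtration_of_sum_mul_mem (hx : Function.Bijective (monomialSum lam x)) {k : ℕ}
    {w : Fin n → S} (h : ∑ i, x i * w i ∈ filtration lam x (k + 1)) (i : Fin n) :
    w i ∈ filtration lam x k := by
  obtain ⟨p, hp, hpw⟩ := h
  choose q hq using fun i => hx.2 (w i)
  have hcons : cons 0 q = p :=
    hx.1 (by simp only [monomialSum_cons, map_zero, zero_add, hq, hpw])
  rw [← hq i, ← tail_cons 0 q i, hcons]
  exact monomialSum_mem_filtration (tail_mem_supported hp i)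

lemma mem_filtration_of_sum_mul_mem_of_eq_sum_sub (hx : Function.Bijective (monomialSum lam x))
    (hxσ : ∀ r j, lam r * x j = (∑ i, x i * lam (σ r i j)) + lam (δ r j))
    {A B : Matrix (Fin n) (Fin n) R} {d : Fin n → R}
    (hy : ∀ j, y j = (∑ i, x i * lam (A i j)) - lam (d j)) (hBA : B * A = 1) {k : ℕ}
    {z : Fin n → S} (hz : ∀ j, z j ∈ filtration lam x (k + 1))
    (h : ∑ j, y j * z j ∈ filtration lam x (k + 1)) (j : Fin n) :
    z j ∈ filtration lam x k := by
  set w : Fin n → S := fun i => ∑ l, lam (A i l) * z l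
  have hyz : ∑ i, x i * w i = (∑ j, y j * z j) + ∑ j, lam (d j) * z j := by
    simp only [w, hy, sub_mul, Finset.sum_sub_distrib, Finset.sum_mul, Finset.mul_sum, mul_assoc]
    rw [Finset.sum_comm]
    abel
  have hw : ∀ i, w i ∈ filtration lam x k := mem_filtration_of_sum_mul_mem hx (by
    rw [hyz]
    exact add_mem h (sum_mem fun j _ => lam_mul_mem_filtration hxσ _ (hz j)))
  have hzw : z j = ∑ i, lam (B j i) * w i := by
    simp only [w, Finset.mul_sum, ← mul_assoc, ← map_mul]
    rw [Finset.sum_comm]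
    simp only [← Finset.sum_mul, ← map_sum, ← Matrix.mul_apply, hBA, Matrix.one_apply,
      apply_ite lam, map_one, map_zero, ite_mul, one_mul, zero_mul, Finset.sum_ite_eq,
      Finset.mem_univ, if_true]
  rw [hzw]
  exact sum_mem fun i _ => lam_mul_mem_filtration hxσ _ (hw i)

lemma mem_supported_of_monomialSum_mem_filtration (hx : Function.Bijective (monomialSum lam x))
    (hxσ : ∀ r j, lam r * x j = (∑ i, x i * lam (σ r i j)) + lam (δ r j))
    {A B : Matrix (Fin n) (Fin n) R} {d : Fin n → R}
    (hy : ∀ j, y j = (∑ i, x i * lam (A i j)) - lam (d j)) (hBA : B * A = 1)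
    (hyx : ∀ k, filtration lam y k ≤ filtration lam x k) (k : ℕ)
    {p : FreeMonoid (Fin n) →₀ R}
    (hp : p ∈ supported R R {w | w.length < k + 1})
    (hpy : monomialSum lam y p ∈ filtration lam x k) :
    p ∈ supported R R {w | w.length < k} := by
  induction k generalizing p with
  | zero =>
    have htail : ∀ j, tail j p = 0 := fun j => by
      simpa using tail_mem_supported hp j
    rw [monomialSum_eq_add_sum_tail, filtration_zero] at hpy
    simp only [htail, map_zero, mul_zero, Finset.sum_const_zero, add_zero,
      AddSubgroup.mem_bot] at hpy
    have hp1 : p 1 = 0 := injective_of_injective_monomialSum hx.1 (by rw [hpy, map_zero])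
    rw [← cons_tail p, hp1]
    simp [htail, cons]
  | succ k ih =>
    have hz : ∀ j, monomialSum lam y (tail j p) ∈ filtration lam x (k + 1) := fun j =>
      hyx _ (monomialSum_mem_filtration (tail_mem_supported hp j))
    have hsum : ∑ j, y j * monomialSum lam y (tail j p) ∈ filtration lam x (k + 1) := by
      have h1 : lam (p 1) ∈ filtration lam x (k + 1) := by
        simpa using lift_mul_mem_filtration (g := x) (w := 1) (by simp) (p 1)
      rw [monomialSum_eq_add_sum_tail] at hpy
      simpa using sub_mem hpy h1
    exact mem_supported_of_tail_mem fun j =>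
      ih (tail_mem_supported hp j)
        (mem_filtration_of_sum_mul_mem_of_eq_sum_sub hx hxσ hy hBA hz hsum j)

lemma injective_monomialSum (hx : Function.Bijective (monomialSum lam x))
    (hxσ : ∀ r j, lam r * x j = (∑ i, x i * lam (σ r i j)) + lam (δ r j))
    {A B : Matrix (Fin n) (Fin n) R} {d : Fin n → R}
    (hy : ∀ j, y j = (∑ i, x i * lam (A i j)) - lam (d j)) (hBA : B * A = 1)
    (hyx : ∀ k, filtration lam y k ≤ filtration lam x k) :
    Function.Injective (monomialSum lam y) := by
  rw [injective_iff_map_eq_zero]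
  intro p hp
  obtain ⟨k, hk⟩ := exists_mem_supported_length_lt p
  induction k with
  | zero => simpa using hk
  | succ k ih =>
    exact ih (mem_supported_of_monomialSum_mem_filtration hx hxσ hy hBA hyx k hk
      (hp ▸ zero_mem _))

lemma surjective_monomialSum (hx : Function.Surjective (monomialSum lam x))
    (hxy : ∀ k, filtration lam x k ≤ filtration lam y k) :
    Function.Surjective (monomialSum lam y) := by
  intro s
  obtain ⟨p, rfl⟩ := hx s
  obtain ⟨k, hk⟩ := exists_mem_supported_length_lt p
  exact filtration_le_range y k (hxy k (monomialSum_mem_filtration hk))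

lemma injective_lift (hx : Function.Injective (FreeMonoid.lift x))
    (hxΦ : Function.Surjective (monomialSum lam x))
    (hy : Function.Injective (monomialSum lam y)) :
    Function.Injective (FreeMonoid.lift y) := by
  rcases subsingleton_or_nontrivial R with _ | _
  · -- a trivial `R` makes `S` trivial, and then `lift x` can only be injective on a trivial monoid
    have : Subsingleton S := ⟨fun s t => by
      obtain ⟨p, rfl⟩ := hxΦ s
      obtain ⟨q, rfl⟩ := hxΦ t
      rw [Subsingleton.elim p q]⟩
    have := hx.subsingleton
    exact Function.injective_of_subsingleton _
  · intro w v hwv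
    exact single_left_injective one_ne_zero (hy (by simp only [monomialSum_single, hwv]))

end Freeness

end SkewFreeExt

theorem skewFreeExt_kill_derivation_general {R : Type} [Ring R] {n : ℕ}
    (σ : R →+* Matrix (Fin n) (Fin n) R) (δ : R → Fin n → R)
    (S : Type) [Ring S] (lam : R →+* S) (x : Fin n → S)
    (hS : IsSkewFreeExt σ δ S lam x)
    (c : R) (hc : ∀ t : R, c * t = t * c)
    (hinv : IsUnit (c • (1 : Matrix (Fin n) (Fin n) R) - σ c)) :
    IsSkewFreeExt σ (fun _ _ => (0 : R)) S lam
      (fun j => x j * lam c - lam c * x j) ∧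
    ∀ (r : R) (j : Fin n),
      lam r * (x j * lam c - lam c * x j)
        = ∑ i, (x i * lam c - lam c * x i) * lam (σ r i j) := by
  open SkewFreeExt in
  obtain ⟨hxlift, hxΦ, hxσ⟩ := hS
  obtain ⟨⟨A, B, hAB, hBA⟩, hA : A = c • 1 - σ c⟩ := hinv
  set y : Fin n → S := fun j => x j * lam c - lam c * x j
  have hyσ : ∀ r j, lam r * y j = ∑ i, y i * lam (σ r i j) :=
    lam_mul_commutator hxσ fun t => by rw [← map_mul, ← map_mul, hc]
  have hy : ∀ j, y j = (∑ i, x i * lam (A i j)) - lam (δ c j) := fun j => by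
    rw [hA]; exact commutator_eq_sum hxσ c j
  have hyσ₀ : ∀ r j, lam r * y j = (∑ i, y i * lam (σ r i j)) + lam ((fun _ _ => 0) r j) :=
    fun r j => by rw [hyσ, map_zero, add_zero]
  have hyx : ∀ k, filtration lam y k ≤ filtration lam x k :=
    filtration_le_of_eq_sum hxσ A (-δ c) fun j => by rw [hy, sub_eq_add_neg, ← map_neg]; rfl
  have hxy : ∀ k, filtration lam x k ≤ filtration lam y k :=
    filtration_le_of_eq_sum hyσ₀ B (Matrix.vecMul (δ c) B) (eq_sum_add_of_eq_sum_sub hy hAB)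
  have hyΦ : Function.Bijective (monomialSum lam y) :=
    ⟨injective_monomialSum hxΦ hxσ hy hBA hyx, surjective_monomialSum hxΦ.2 hxy⟩
  exact ⟨⟨injective_lift hxlift hxΦ.2 hyΦ.1, hyΦ, hyσ₀⟩, hyσ⟩

/-- If `c` is central in `R` and `cIₙ − σ(c)` is invertible in `Mₙ(R)`, then with
`y_j = x_j·c − c·x_j` the ring `S` is the `(σ,0)`-free skew extension of `R`
generated by `y₁,…,yₙ`; in particular `r·y_j = Σᵢ yᵢσ_{ij}(r)` for all `r, j`. -/
theorem skewFreeExt_kill_derivation {R : Type} [Ring R] {n : ℕ}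
    (σ : R →+* Matrix (Fin n) (Fin n) R) (δ : R → Fin n → R)
    (hδ : IsRightSigmaDeriv σ δ)
    (S : Type) [Ring S] (lam : R →+* S) (x : Fin n → S)
    (hS : IsSkewFreeExt σ δ S lam x)
    (c : R) (hc : ∀ t : R, c * t = t * c)
    (hinv : IsUnit (c • (1 : Matrix (Fin n) (Fin n) R) - σ c)) :
    IsSkewFreeExt σ (fun _ _ => (0 : R)) S lam
      (fun j => x j * lam c - lam c * x j) ∧
    ∀ (r : R) (j : Fin n),
      lam r * (x j * lam c - lam c * x j)
        = ∑ i, (x i * lam c - lam c * x i) * lam (σ r i j) :=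
  skewFreeExt_kill_derivation_general σ δ S lam x hS c hc hinv
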